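/- Assume that 2^κ < ℵ_ω for every cardinal κ < ℵ_ω. Let X be a linearly Lindelöf topological space with tightness t(X) < ℵ_ω. Then every open cover of X has a countable subcover (so X is Lindelöf). -/

import Mathlib

open Set Cardinal Topology

universe u v

/-- A space is quasi-Lindelöf if every open cover has a countable subcover
(no separation axioms assumed). -/
def QuasiLindelofSp (X : Type u) [TopologicalSpace X] : Prop :=
  ∀ 𝒰 : Set (Set X), (∀ U ∈ 𝒰, IsOpen U) → ⋃₀ 𝒰 = Set.univ →
    ∃ 𝒱 ⊆ 𝒰, 𝒱.Countable ∧ ⋃₀ 𝒱 = Set.univ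

/-- Lindelöf in the sense of Engelking: regular (T3, including T1) and
every open cover has a countable subcover. -/
def EngLindelofSp (X : Type u) [TopologicalSpace X] : Prop :=
  RegularSpace X ∧ T1Space X ∧ QuasiLindelofSp X

/-- X is productively Lindelöf if X × Y is Lindelöf for every Lindelöf space Y. -/
def ProductivelyLindelofSp (X : Type u) [TopologicalSpace X] : Prop :=
  ∀ (Y : Type u) [TopologicalSpace Y], EngLindelofSp Y → EngLindelofSp (X × Y)

/-- X is productively quasi-Lindelöf if X × Y is quasi-Lindelöf for every Lindelöf space Y. -/
def ProductivelyQuasiLindelofSp (X : Type u) [TopologicalSpace X] : Prop :=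
  ∀ (Y : Type u) [TopologicalSpace Y], EngLindelofSp Y → QuasiLindelofSp (X × Y)

/-- X is powerfully Lindelöf if X^ω is Lindelöf. -/
def PowerfullyLindelofSp (X : Type u) [TopologicalSpace X] : Prop :=
  EngLindelofSp (ℕ → X)

/-- X is powerfully quasi-Lindelöf if X^ω is quasi-Lindelöf. -/
def PowerfullyQuasiLindelofSp (X : Type u) [TopologicalSpace X] : Prop :=
  QuasiLindelofSp (ℕ → X)

/-- Tightness of X is at most κ. -/
def TightnessLE (X : Type u) [TopologicalSpace X] (κ : Cardinal.{u}) : Prop :=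
  ∀ (A : Set X) (x : X), x ∈ closure A → ∃ B ⊆ A, #B ≤ κ ∧ x ∈ closure B

/-- X has countable tightness. -/
def CountableTightness (X : Type u) [TopologicalSpace X] : Prop :=
  ∀ (A : Set X) (x : X), x ∈ closure A → ∃ B ⊆ A, B.Countable ∧ x ∈ closure B

/-- The Lindelöf number of X is at most κ: every open cover has a subcover of size ≤ κ. -/
def LindelofNumberLE (X : Type u) [TopologicalSpace X] (κ : Cardinal.{u}) : Prop :=
  ∀ 𝒰 : Set (Set X), (∀ U ∈ 𝒰, IsOpen U) → ⋃₀ 𝒰 = Set.univ →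
    ∃ 𝒱 ⊆ 𝒰, #𝒱 ≤ κ ∧ ⋃₀ 𝒱 = Set.univ

/-- The weight of X is at most κ: there is a base of size ≤ κ. -/
def WeightLE (X : Type u) [TopologicalSpace X] (κ : Cardinal.{u}) : Prop :=
  ∃ B : Set (Set X), TopologicalSpace.IsTopologicalBasis B ∧ #B ≤ κ

/-- N is a network for X. -/
def IsNetwork (X : Type u) [TopologicalSpace X] (N : Set (Set X)) : Prop :=
  ∀ (x : X) (U : Set X), IsOpen U → x ∈ U → ∃ n ∈ N, x ∈ n ∧ n ⊆ U

/-- X is linearly Lindelöf: regular (incl. T1) and every open cover linearly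
ordered by inclusion has a countable subcover. -/
def LinearlyLindelofSp (X : Type u) [TopologicalSpace X] : Prop :=
  RegularSpace X ∧ T1Space X ∧
    ∀ 𝒰 : Set (Set X), (∀ U ∈ 𝒰, IsOpen U) → IsChain (· ⊆ ·) 𝒰 → ⋃₀ 𝒰 = Set.univ →
      ∃ 𝒱 ⊆ 𝒰, 𝒱.Countable ∧ ⋃₀ 𝒱 = Set.univ

/-- U ⊆ X^ω is a basic open set: a product of open sets, all but finitely many of
which equal X. -/
def IsBasicOpen (X : Type u) [TopologicalSpace X] (U : Set (ℕ → X)) : Prop :=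
  ∃ V : ℕ → Set X, (∀ i, IsOpen (V i)) ∧ {i | V i ≠ Set.univ}.Finite ∧
    U = Set.pi Set.univ V

/-- A family of subsets of Z is point-κ if every point belongs to at most κ members. -/
def PointLE {Z : Type u} (𝒲 : Set (Set Z)) (κ : Cardinal.{u}) : Prop :=
  ∀ z : Z, #({W ∈ 𝒲 | z ∈ W}) ≤ κ

/-- A non-empty space is zero-dimensional if it is T1 and has a base of clopen sets. -/
def ZeroDimensionalSp (Y : Type u) [TopologicalSpace Y] : Prop :=
  Nonempty Y ∧ T1Space Y ∧
    ∃ B : Set (Set Y), TopologicalSpace.IsTopologicalBasis B ∧ ∀ b ∈ B, IsClopen b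

namespace Cardinal

theorem IsRegular.exists_gt_of_mk_lt {c : Cardinal.{u}} (hc : c.IsRegular)
    {s : Set c.ord.ToType} (hs : #s < c) : ∃ b, ∀ a ∈ s, a < b :=
  not_isCofinal_iff.1 fun h => (Order.cof_le h).not_gt (by rwa [Ordinal.cof_toType, hc.cof_ord])

theorem exists_le_aleph_natCast_of_lt_aleph_omega0 {c : Cardinal.{u}}
    (h : c < aleph Ordinal.omega0) : ∃ n : ℕ, c ≤ ℵ_ n := by
  rw [aleph_limit Ordinal.isSuccLimit_omega0] at h
  obtain ⟨⟨a, ha⟩, hca⟩ := exists_lt_of_lt_ciSup' h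
  obtain ⟨n, rfl⟩ := Ordinal.lt_omega0.1 ha
  exact ⟨n, hca.le⟩

theorem mk_iUnion_bounded_subset_le_two_pow {α β : Type u} (S : Set α) {κ : Cardinal.{u}}
    (hκ : ℵ₀ ≤ κ) (hS : #S ≤ 2 ^ κ) (V : Set α → Set β)
    (hV : ∀ T : Set α, #T ≤ κ → #(V T) ≤ 2 ^ κ) :
    #(⋃ T : {T : Set α // T ⊆ S ∧ #T ≤ κ}, V T.1) ≤ 2 ^ κ := by
  have hℵ₀ : ℵ₀ ≤ 2 ^ κ := hκ.trans (cantor κ).le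
  have hindex : #{T : Set α // T ⊆ S ∧ #T ≤ κ} ≤ 2 ^ κ :=
    calc #{T : Set α // T ⊆ S ∧ #T ≤ κ} ≤ max #S ℵ₀ ^ κ := mk_bounded_subset_le S κ
      _ ≤ (2 ^ κ) ^ κ := power_le_power_right (max_le hS hℵ₀)
      _ = 2 ^ κ := by rw [← power_mul, mul_eq_self hκ]
  calc #(⋃ T : {T : Set α // T ⊆ S ∧ #T ≤ κ}, V T.1)
      ≤ #{T : Set α // T ⊆ S ∧ #T ≤ κ} * ⨆ T : {T : Set α // T ⊆ S ∧ #T ≤ κ}, #(V T.1) :=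
        mk_iUnion_le _
    _ ≤ 2 ^ κ * 2 ^ κ := mul_le_mul' hindex (ciSup_le' fun T => hV T T.2.2)
    _ = 2 ^ κ := mul_eq_self hℵ₀

end Cardinal

theorem exists_forall_restrict_Iio {T : Type*} {X : Sort*} [Preorder T] [WellFoundedLT T]
    (P : (b : T) → (Iio b → X) → X → Prop) (h : ∀ b p, ∃ x, P b p x) :
    ∃ g : T → X, ∀ b, P b (fun a => g a) (g b) := by
  let F : (b : T) → ((a : T) → a < b → X) → X := fun b p => (h b fun a => p a a.2).choose
  refine ⟨wellFounded_lt.fix F, fun b => ?_⟩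
  rw [wellFounded_lt.fix_eq F b]
  exact (h b _).choose_spec

theorem LindelofNumberLE.mono {X : Type u} [TopologicalSpace X] {κ κ' : Cardinal.{u}}
    (h : LindelofNumberLE X κ) (hκ : κ ≤ κ') : LindelofNumberLE X κ' := fun 𝒰 hop hcov =>
  (h 𝒰 hop hcov).imp fun _ ⟨h𝒱𝒰, h𝒱, h𝒱cov⟩ => ⟨h𝒱𝒰, h𝒱.trans hκ, h𝒱cov⟩

theorem TightnessLE.mono {X : Type u} [TopologicalSpace X] {κ κ' : Cardinal.{u}}
    (h : TightnessLE X κ) (hκ : κ ≤ κ') : TightnessLE X κ' := fun A x hx =>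
  (h A x hx).imp fun _ ⟨hBA, hB, hxB⟩ => ⟨hBA, hB.trans hκ, hxB⟩

/- In a regular space each `y ∈ closure S` has a neighbourhood `W` with `closure W` inside a
member of `𝒰`, and `y ∈ closure (S ∩ W)`: so one member of `𝒰` for each such trace `S ∩ W ⊆ S`
suffices. -/
theorem exists_subset_mk_le_two_pow_closure_subset_sUnion {X : Type u} [TopologicalSpace X]
    [RegularSpace X] (S : Set X) {𝒰 : Set (Set X)} (hop : ∀ U ∈ 𝒰, IsOpen U)
    (hcov : closure S ⊆ ⋃₀ 𝒰) : ∃ 𝒱 ⊆ 𝒰, #𝒱 ≤ 2 ^ #S ∧ closure S ⊆ ⋃₀ 𝒱 := by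
  choose φ hφ𝒰 hφ using fun E : {E : Set X // E ⊆ S ∧ ∃ U ∈ 𝒰, closure E ⊆ U} => E.2.2
  refine ⟨range φ, range_subset_iff.2 hφ𝒰, ?_, fun y hy => ?_⟩
  · calc #(range φ) ≤ #{E : Set X // E ⊆ S ∧ ∃ U ∈ 𝒰, closure E ⊆ U} := mk_range_le
      _ ≤ #(𝒫 S) := mk_subtype_mono fun E hE => hE.1
      _ = 2 ^ #S := mk_powerset S
  obtain ⟨U, hU, hyU⟩ := hcov hy
  obtain ⟨C, hC, hCc, hCU⟩ := exists_mem_nhds_isClosed_subset ((hop U hU).mem_nhds hyU)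
  have hE : S ∩ interior C ⊆ S ∧ ∃ U ∈ 𝒰, closure (S ∩ interior C) ⊆ U :=
    ⟨inter_subset_left, U, hU,
      (closure_minimal (inter_subset_right.trans interior_subset) hCc).trans hCU⟩
  have hyE : y ∈ closure (S ∩ interior C) := by
    rw [inter_comm]
    exact isOpen_interior.inter_closure ⟨mem_interior_iff_mem_nhds.2 hC, hy⟩
  exact mem_sUnion_of_mem (hφ ⟨_, hE⟩ hyE) (mem_range_self _)

def ChainLindelofSp (X : Type u) [TopologicalSpace X] : Prop :=
  ∀ 𝒰 : Set (Set X), (∀ U ∈ 𝒰, IsOpen U) → IsChain (· ⊆ ·) 𝒰 → ⋃₀ 𝒰 = Set.univ →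
    ∃ 𝒱 ⊆ 𝒰, 𝒱.Countable ∧ ⋃₀ 𝒱 = Set.univ

namespace ChainLindelofSp

variable {X : Type u} [TopologicalSpace X] (hX : ChainLindelofSp X)
include hX

theorem exists_eq_univ_of_monotone {c : Cardinal.{u}} (hc : c.IsRegular) (hℵ₀ : ℵ₀ < c)
    {W : c.ord.ToType → Set X} (hWo : ∀ b, IsOpen (W b)) (hW : Monotone W)
    (hcov : ⋃ b, W b = Set.univ) : ∃ b, W b = Set.univ := by
  obtain ⟨𝒱, h𝒱W, h𝒱, h𝒱cov⟩ :=
    hX (range W) (forall_mem_range.2 hWo) hW.isChain_range (by rwa [sUnion_range])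
  choose ι hι using fun V : 𝒱 => h𝒱W V.2
  obtain ⟨b, hb⟩ := hc.exists_gt_of_mk_lt (s := range ι)
    (mk_range_le.trans_lt ((le_aleph0_iff_set_countable.2 h𝒱).trans_lt hℵ₀))
  refine ⟨b, eq_univ_of_univ_subset (h𝒱cov ▸ sUnion_subset fun V hV => ?_)⟩
  simpa only [hι] using hW (hb _ (mem_range_self ⟨V, hV⟩)).le

theorem exists_mem_closure_image_Ici {c : Cardinal.{u}} (hc : c.IsRegular) (hℵ₀ : ℵ₀ < c)
    (g : c.ord.ToType → X) : ∃ x, ∀ b, x ∈ closure (g '' Ici b) := by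
  by_contra! h
  obtain ⟨b, hb⟩ := hX.exists_eq_univ_of_monotone hc hℵ₀ (W := fun b => (closure (g '' Ici b))ᶜ)
    (fun _ => isClosed_closure.isOpen_compl)
    (fun _ _ hbb' => compl_subset_compl.2 (closure_mono (image_mono (Ici_subset_Ici.2 hbb'))))
    (iUnion_eq_univ_iff.2 h)
  exact (hb.symm ▸ mem_univ (g b) : g b ∈ (closure (g '' Ici b))ᶜ)
    (subset_closure (mem_image_of_mem g self_mem_Ici))

theorem exists_mem_closure_small_subset_image_Iio_and_image_Ici {κ c : Cardinal.{u}}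
    (ht : TightnessLE X κ) (hc : c.IsRegular) (hℵ₀ : ℵ₀ < c) (hκ : κ < c) (g : c.ord.ToType → X) :
    ∃ x b, ∃ B ⊆ g '' Iio b, #B ≤ κ ∧ x ∈ closure B ∧ x ∈ closure (g '' Ici b) := by
  obtain ⟨x, hx⟩ := hX.exists_mem_closure_image_Ici hc hℵ₀ g
  obtain ⟨b₀⟩ : Nonempty c.ord.ToType := by
    rw [← mk_ne_zero_iff, mk_ord_toType]
    exact (aleph0_pos.trans hℵ₀).ne'
  obtain ⟨B, hBg, hBκ, hxB⟩ := ht _ x (closure_mono (image_subset_range _ _) (hx b₀))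
  choose ι hι using fun y : B => hBg y.2
  obtain ⟨b, hb⟩ := hc.exists_gt_of_mk_lt (s := range ι) (mk_range_le.trans_lt (hBκ.trans_lt hκ))
  exact ⟨x, b, B, fun y hy => ⟨ι ⟨y, hy⟩, hb _ (mem_range_self _), hι _⟩, hBκ, hxB, hx b⟩

/- The unions of the initial segments of a subcover enumerated along `l⁺` form a chain cover;
one of them is everything, and it has at most `l` members. -/
theorem lindelofNumberLE_of_succ {l : Cardinal.{u}} (hl : ℵ₀ ≤ l)
    (h : LindelofNumberLE X (Order.succ l)) : LindelofNumberLE X l := by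
  intro 𝒰 hop hcov
  obtain ⟨𝒱, h𝒱𝒰, h𝒱, h𝒱cov⟩ := h 𝒰 hop hcov
  have hc : (Order.succ l).IsRegular := isRegular_succ hl
  obtain ⟨e⟩ : Nonempty (𝒱 ↪ (Order.succ l).ord.ToType) := by rwa [← le_def, mk_ord_toType]
  let W : (Order.succ l).ord.ToType → Set X := fun b => ⋃₀ (Subtype.val '' (e ⁻¹' Iio b))
  have hW𝒰 : ∀ b, Subtype.val '' (e ⁻¹' Iio b) ⊆ 𝒰 :=
    fun b => (image_subset_range _ _).trans (Subtype.range_coe.trans_subset h𝒱𝒰)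
  have hWcov : ⋃ b, W b = Set.univ := by
    refine eq_univ_of_forall fun x => ?_
    obtain ⟨V, hV, hxV⟩ : x ∈ ⋃₀ 𝒱 := h𝒱cov ▸ mem_univ x
    obtain ⟨b, hb⟩ := hc.exists_gt_of_mk_lt (s := {e ⟨V, hV⟩})
      (by rw [mk_singleton]; exact one_lt_aleph0.trans_le (hl.trans (Order.le_succ l)))
    exact mem_iUnion.2 ⟨b, V, ⟨⟨V, hV⟩, hb _ rfl, rfl⟩, hxV⟩
  obtain ⟨b, hb⟩ := hX.exists_eq_univ_of_monotone hc (hl.trans_lt (Order.lt_succ l))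
    (fun b => isOpen_sUnion fun U hU => hop U (hW𝒰 b hU))
    (fun _ _ hbb' => sUnion_mono (image_mono (preimage_mono (Iio_subset_Iio hbb'))))
    hWcov
  refine ⟨_, hW𝒰 b, ?_, hb⟩
  calc #(Subtype.val '' (e ⁻¹' Iio b)) ≤ #(e ⁻¹' Iio b) := mk_image_le
    _ ≤ #(Iio b) := mk_preimage_of_injective _ _ e.injective
    _ ≤ l := Order.lt_succ_iff.1 (by simpa using mk_Iio_lt b)

theorem quasiLindelofSp_of_lindelofNumberLE_aleph {n : ℕ} (h : LindelofNumberLE X (ℵ_ n)) :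
    QuasiLindelofSp X := by
  induction n with
  | zero =>
    intro 𝒰 hop hcov
    obtain ⟨𝒱, h𝒱𝒰, h𝒱, h𝒱cov⟩ := h 𝒰 hop hcov
    exact ⟨𝒱, h𝒱𝒰, le_aleph0_iff_set_countable.1 (by simpa using h𝒱), h𝒱cov⟩
  | succ n ih =>
    refine ih (hX.lindelofNumberLE_of_succ (aleph0_le_aleph n) ?_)
    rwa [succ_aleph, ← Nat.cast_succ]

/- If `𝒰` had no subcover of size `≤ 2 ^ κ`, recursion along `(2 ^ κ)⁺` would produce points
`g b` outside every `⋃₀ V T` with `T ⊆ g '' Iio b` and `#T ≤ κ`, where `V T` covers `closure T`.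
An accumulation point `x` of all tails of `g` lies, by tightness, in the closure of some such `T`,
hence in the open set `⋃₀ V T`, which the tail of `g` beyond `T` avoids. -/
theorem lindelofNumberLE_two_pow [RegularSpace X] {κ : Cardinal.{u}} (hκ : ℵ₀ ≤ κ)
    (ht : TightnessLE X κ) : LindelofNumberLE X (2 ^ κ) := by
  intro 𝒰 hop hcov
  by_contra! hno
  choose V hV𝒰 hVcard hVcl using fun T : Set X =>
    exists_subset_mk_le_two_pow_closure_subset_sUnion T hop (hcov ▸ subset_univ _)
  let 𝒲 : Set X → Set (Set X) := fun S => ⋃ T : {T : Set X // T ⊆ S ∧ #T ≤ κ}, V T.1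
  have h𝒲 : ∀ S : Set X, #S ≤ 2 ^ κ → ∃ x, x ∉ ⋃₀ 𝒲 S := by
    intro S hS
    by_contra! h
    exact hno (𝒲 S) (iUnion_subset fun T => hV𝒰 T.1)
      (mk_iUnion_bounded_subset_le_two_pow S hκ hS V
        fun T hT => (hVcard T).trans (power_le_power_left two_ne_zero hT))
      (eq_univ_of_forall h)
  have hℵ₀ : ℵ₀ ≤ 2 ^ κ := hκ.trans (cantor κ).le
  obtain ⟨g, hg⟩ :=
    exists_forall_restrict_Iio (T := (Order.succ (2 ^ κ : Cardinal.{u})).ord.ToType)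
    (fun _ p x => x ∉ ⋃₀ 𝒲 (range p))
    fun b _ => h𝒲 _ (mk_range_le.trans (Order.lt_succ_iff.1 (by simpa using mk_Iio_lt b)))
  obtain ⟨x, b, B, hBg, hBκ, hxB, hx⟩ :=
    hX.exists_mem_closure_small_subset_image_Iio_and_image_Ici ht (isRegular_succ hℵ₀)
      (hℵ₀.trans_lt (Order.lt_succ _)) ((cantor κ).trans (Order.lt_succ _)) g
  have hO : IsOpen (⋃₀ V B) := isOpen_sUnion fun U hU => hop U (hV𝒰 B hU)
  have htail : g '' Ici b ⊆ (⋃₀ V B)ᶜ := by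
    rintro _ ⟨b', hb', rfl⟩ hgb'
    have hB : B ⊆ range fun a : Iio b' => g a := hBg.trans <| by
      rintro _ ⟨a, ha, rfl⟩
      exact ⟨⟨a, mem_Iio.2 ((mem_Iio.1 ha).trans_le hb')⟩, rfl⟩
    exact hg b' (sUnion_mono (subset_iUnion_of_subset ⟨B, hB, hBκ⟩ subset_rfl) hgb')
  exact closure_minimal htail hO.isClosed_compl hx (hVcl B hxB)

end ChainLindelofSp

/-- Assume 2^κ < ℵ_ω for every cardinal κ < ℵ_ω. Then every linearly
Lindelöf space with tightness less than ℵ_ω is Lindelöf. -/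
theorem stmt8 (hexp : ∀ κ : Cardinal.{u}, κ < Cardinal.aleph Ordinal.omega0 →
      2 ^ κ < Cardinal.aleph Ordinal.omega0)
    (X : Type u) [TopologicalSpace X]
    (hlin : LinearlyLindelofSp X)
    (ht : ∃ κ : Cardinal.{u}, κ < Cardinal.aleph Ordinal.omega0 ∧ TightnessLE X κ) :
    QuasiLindelofSp X := by
  obtain ⟨_, -, hX⟩ := hlin
  change ChainLindelofSp X at hX
  obtain ⟨κ, hκω, hκ⟩ := ht
  have hκ' : κ ⊔ ℵ₀ < Cardinal.aleph Ordinal.omega0 :=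
    max_lt hκω (Cardinal.aleph0_lt_aleph.2 Ordinal.omega0_pos)
  obtain ⟨n, hn⟩ := Cardinal.exists_le_aleph_natCast_of_lt_aleph_omega0 (hexp _ hκ')
  exact hX.quasiLindelofSp_of_lindelofNumberLE_aleph
    ((hX.lindelofNumberLE_two_pow le_sup_right (hκ.mono le_sup_left)).mono hn)
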